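/- For κ > 1 and λ ∈ [0,2], there exists a constant C = C(κ,λ) such that the second-order Taylor remainder of z ↦ z^{⟨κ⟩} satisfies |F_{⟨κ⟩}(w,z)| ≤ C |z-w|^λ (max(|w|,|z|))^{κ-λ} for all w, z ∈ R^n. -/

import Mathlib

open Classical

noncomputable def sgnPowVec (n : ℕ) (κ : ℝ) (z : EuclideanSpace ℝ (Fin n)) :
    EuclideanSpace ℝ (Fin n) :=
  ‖z‖ ^ (κ - 1) • z

/-- The Jacobi matrix `J_{⟨κ⟩}(w)` of `z ↦ z^{⟨κ⟩}` applied to a vector `v`: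
`|w|^{κ-1}((κ-1)(w/|w|)⊗(w/|w|) + Id) v` for `w ≠ 0`, and `0` for `w = 0`. -/
noncomputable def sgnPowJacobi (n : ℕ) (κ : ℝ) (w v : EuclideanSpace ℝ (Fin n)) :
    EuclideanSpace ℝ (Fin n) :=
  if w = 0 then 0
  else ‖w‖ ^ (κ - 1) •
    ((((κ - 1) * (inner ℝ w v : ℝ) / ‖w‖ ^ 2) • w) + v)

noncomputable def sgnPowRemainder (n : ℕ) (κ : ℝ) (w z : EuclideanSpace ℝ (Fin n)) :
    EuclideanSpace ℝ (Fin n) :=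
  sgnPowVec n κ z - sgnPowVec n κ w - sgnPowJacobi n κ w (z - w)

/-! ### Auxiliary lemmas -/

section Aux

noncomputable def Jmap (n : ℕ) (κ : ℝ) (x : EuclideanSpace ℝ (Fin n)) :
    EuclideanSpace ℝ (Fin n) →L[ℝ] EuclideanSpace ℝ (Fin n) :=
  (‖x‖ ^ (κ - 1)) • ContinuousLinearMap.id ℝ _ +
    ((κ - 1) * ‖x‖ ^ (κ - 3)) • (innerSL ℝ x).smulRight x

lemma Jmap_apply (n : ℕ) (κ : ℝ) (x v : EuclideanSpace ℝ (Fin n)) :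
    Jmap n κ x v = ‖x‖ ^ (κ - 1) • v +
      ((κ - 1) * ‖x‖ ^ (κ - 3) * (inner ℝ x v : ℝ)) • x := by
  simp only [Jmap, ContinuousLinearMap.add_apply, ContinuousLinearMap.smul_apply,
    ContinuousLinearMap.id_apply, ContinuousLinearMap.smulRight_apply, innerSL_apply_apply,
    smul_smul]

lemma norm_sq_rpow {n : ℕ} (y : EuclideanSpace ℝ (Fin n)) (p : ℝ) :
    (‖y‖ ^ 2 : ℝ) ^ (p/2) = ‖y‖ ^ p := by
  rw [← Real.rpow_natCast ‖y‖ 2, ← Real.rpow_mul (norm_nonneg y)]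
  norm_num
  congr 1
  ring

lemma Jmap_eq_sgnPowJacobi {n : ℕ} {κ : ℝ} {x : EuclideanSpace ℝ (Fin n)} (hx : x ≠ 0)
    (v : EuclideanSpace ℝ (Fin n)) : sgnPowJacobi n κ x v = Jmap n κ x v := by
  have hb : (0:ℝ) < ‖x‖ := norm_pos_iff.2 hx
  have hb2 : (‖x‖ ^ 2 : ℝ) ≠ 0 := by positivity
  have hsplit : ‖x‖ ^ (κ - 1) = ‖x‖ ^ (κ - 3) * ‖x‖ ^ 2 := by
    rw [← Real.rpow_natCast ‖x‖ 2, ← Real.rpow_add hb]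
    congr 1
    ring
  rw [sgnPowJacobi, if_neg hx, Jmap_apply, smul_add, smul_smul, add_comm]
  congr 2
  rw [hsplit]
  field_simp

lemma hasFDerivAt_sgnPowVec {n : ℕ} {κ : ℝ} {x : EuclideanSpace ℝ (Fin n)} (hx : x ≠ 0) :
    HasFDerivAt (sgnPowVec n κ) (Jmap n κ x) x := by
  have hb : (0:ℝ) < ‖x‖ := norm_pos_iff.2 hx
  have hsq : (‖x‖ ^ 2 : ℝ) ≠ 0 := by positivity
  have h0 : HasFDerivAt (fun y : EuclideanSpace ℝ (Fin n) => (‖y‖ ^ 2 : ℝ))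
      (2 • innerSL ℝ x) x := (hasStrictFDerivAt_norm_sq x).hasFDerivAt
  have h1 := h0.rpow_const (p := (κ-1)/2) (Or.inl hsq)
  have h2 := h1.smul (hasFDerivAt_id x)
  have hfun : (sgnPowVec n κ) = fun y : EuclideanSpace ℝ (Fin n) =>
      ((‖y‖ ^ 2 : ℝ) ^ ((κ-1)/2)) • y := by
    funext y
    rw [sgnPowVec, norm_sq_rpow]
  rw [hfun]
  refine h2.congr_fderiv ?_
  refine ContinuousLinearMap.ext fun (v : EuclideanSpace ℝ (Fin n)) => ?_
  simp only [Jmap, ContinuousLinearMap.add_apply, ContinuousLinearMap.smul_apply,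
    ContinuousLinearMap.id_apply, ContinuousLinearMap.smulRight_apply, innerSL_apply_apply,
    norm_sq_rpow]
  have e1 : (κ-1)/2 - 1 = (κ-3)/2 := by ring
  rw [e1, norm_sq_rpow]
  simp only [smul_eq_mul, id_eq]
  module

lemma rpow_le_two_rpow_abs {t : ℝ} (q : ℝ) (h1 : 1/2 ≤ t) (h2 : t ≤ 2) :
    t ^ q ≤ 2 ^ |q| := by
  rcases le_or_gt 0 q with hq | hq
  · rw [abs_of_nonneg hq]
    exact Real.rpow_le_rpow (by linarith) h2 hq
  · rw [abs_of_neg hq]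
    have h := Real.rpow_le_rpow_of_nonpos (by norm_num : (0:ℝ) < 1/2) h1 hq.le
    calc t ^ q ≤ (1/2 : ℝ) ^ q := h
      _ = 2 ^ (-q) := by
          rw [one_div, ← Real.rpow_neg_one, ← Real.rpow_mul (by norm_num)]
          norm_num

lemma annulus_rpow_le {a b : ℝ} (q : ℝ) (hb : 0 < b) (h1 : b/2 ≤ a) (h2 : a ≤ 2*b) :
    a ^ q ≤ 2 ^ |q| * b ^ q := by
  have ha : 0 < a := lt_of_lt_of_le (by positivity) h1
  have : a = (a/b) * b := by field_simp
  rw [this, Real.mul_rpow (by positivity) hb.le]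
  have hd1 : 1/2 ≤ a/b := by rw [le_div_iff₀ hb]; linarith
  have hd2 : a/b ≤ 2 := by rw [div_le_iff₀ hb]; linarith
  exact mul_le_mul_of_nonneg_right (rpow_le_two_rpow_abs q hd1 hd2) (by positivity)

lemma abs_rpow_sub_rpow_le {p r R a b : ℝ} (hr : 0 < r) (har : r ≤ a) (haR : a ≤ R)
    (hbr : r ≤ b) (hbR : b ≤ R) :
    |a ^ p - b ^ p| ≤ |p| * max (r ^ (p-1)) (R ^ (p-1)) * |a - b| := by
  have hderiv : ∀ t ∈ Set.Icc r R,
      HasDerivWithinAt (fun s : ℝ => s ^ p) (p * t ^ (p-1)) (Set.Icc r R) t := by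
    intro t ht
    have htpos : 0 < t := lt_of_lt_of_le hr ht.1
    exact (Real.hasDerivAt_rpow_const (Or.inl htpos.ne')).hasDerivWithinAt
  have hbound : ∀ t ∈ Set.Icc r R,
      ‖p * t ^ (p-1)‖ ≤ |p| * max (r ^ (p-1)) (R ^ (p-1)) := by
    intro t ht
    obtain ⟨ht1, ht2⟩ := ht
    have htpos : 0 < t := lt_of_lt_of_le hr ht1
    rw [Real.norm_eq_abs, abs_mul, abs_of_nonneg (Real.rpow_nonneg htpos.le _)]
    apply mul_le_mul_of_nonneg_left _ (abs_nonneg p)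
    rcases le_or_gt 0 (p-1) with hp | hp
    · exact le_max_of_le_right (Real.rpow_le_rpow htpos.le ht2 hp)
    · exact le_max_of_le_left (Real.rpow_le_rpow_of_nonpos hr ht1 hp.le)
  have := Convex.norm_image_sub_le_of_norm_hasDerivWithin_le hderiv hbound
    (convex_Icc r R) (Set.mem_Icc.2 ⟨hbr, hbR⟩) (Set.mem_Icc.2 ⟨har, haR⟩)
  simpa [Real.norm_eq_abs] using this

lemma max_annulus_le {b : ℝ} (q : ℝ) (hb : 0 < b) :
    max ((b/2) ^ q) ((2*b) ^ q) ≤ 2 ^ |q| * b ^ q :=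
  max_le (annulus_rpow_le q hb le_rfl (by linarith))
    (annulus_rpow_le q hb (by linarith) le_rfl)

lemma rpow_mul_self_eq {c : ℝ} (p : ℝ) (hc : 0 ≤ c) (hp : p + 1 ≠ 0) :
    c ^ p * c = c ^ (p+1) := by
  rcases eq_or_lt_of_le hc with h | h
  · rw [← h]; simp [Real.zero_rpow hp]
  · rw [Real.rpow_add_one h.ne']

lemma Jmap_lip {n : ℕ} {κ : ℝ} (hκ : 1 < κ) {w x : EuclideanSpace ℝ (Fin n)}
    (v : EuclideanSpace ℝ (Fin n)) (hw : w ≠ 0) (hd : ‖x - w‖ ≤ ‖w‖ / 2) :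
    ‖Jmap n κ x v - Jmap n κ w v‖ ≤
      ((κ-1) * (2 ^ |κ-2| + 4 * |κ-3| * 2 ^ |κ-4| + 3)) *
        (‖w‖ ^ (κ-2) * ‖x - w‖ * ‖v‖) := by
  set a := ‖x‖ with ha_def
  set b := ‖w‖ with hb_def
  set d := ‖x - w‖ with hd_def
  have hb : (0:ℝ) < b := norm_pos_iff.2 hw
  have habs : |a - b| ≤ d := abs_norm_sub_norm_le x w
  have hd0 : 0 ≤ d := norm_nonneg _
  have hba : b/2 ≤ a := by
    have := abs_le.1 habs
    linarith [this.1]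
  have ha2 : a ≤ 2*b := by
    have := abs_le.1 habs
    linarith [this.2]
  have h1 : |a ^ (κ-1) - b ^ (κ-1)| ≤ (κ-1) * (2 ^ |κ-2| * b ^ (κ-2)) * d := by
    have e : κ - 1 - 1 = κ - 2 := by ring
    have := abs_rpow_sub_rpow_le (p := κ-1) (by positivity : (0:ℝ) < b/2)
      hba ha2 (by linarith : b/2 ≤ b) (by linarith : b ≤ 2*b)
    rw [e] at this
    calc |a ^ (κ-1) - b ^ (κ-1)|
        ≤ |κ-1| * max ((b/2) ^ (κ-2)) ((2*b) ^ (κ-2)) * |a - b| := this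
      _ ≤ (κ-1) * (2 ^ |κ-2| * b ^ (κ-2)) * d := by
          rw [abs_of_pos (by linarith : (0:ℝ) < κ-1)]
          have hm := max_annulus_le (κ-2) hb
          apply mul_le_mul (mul_le_mul_of_nonneg_left hm (by linarith)) habs
            (abs_nonneg _) (mul_nonneg (by linarith) (by positivity))
  have h3 : |a ^ (κ-3) - b ^ (κ-3)| ≤ |κ-3| * (2 ^ |κ-4| * b ^ (κ-4)) * d := by
    have e : κ - 3 - 1 = κ - 4 := by ring
    have := abs_rpow_sub_rpow_le (p := κ-3) (by positivity : (0:ℝ) < b/2)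
      hba ha2 (by linarith : b/2 ≤ b) (by linarith : b ≤ 2*b)
    rw [e] at this
    calc |a ^ (κ-3) - b ^ (κ-3)|
        ≤ |κ-3| * max ((b/2) ^ (κ-4)) ((2*b) ^ (κ-4)) * |a - b| := this
      _ ≤ |κ-3| * (2 ^ |κ-4| * b ^ (κ-4)) * d := by
          have hm := max_annulus_le (κ-4) hb
          apply mul_le_mul (mul_le_mul_of_nonneg_left hm (abs_nonneg _)) habs
            (abs_nonneg _) (mul_nonneg (abs_nonneg _) (by positivity))
  have hdecomp : Jmap n κ x v - Jmap n κ w v =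
      (a ^ (κ-1) - b ^ (κ-1)) • v
      + (((κ-1) * (a ^ (κ-3) - b ^ (κ-3)) * (inner ℝ x v : ℝ)) • x
      + (((κ-1) * b ^ (κ-3) * (inner ℝ (x - w) v : ℝ)) • x
      + ((κ-1) * b ^ (κ-3) * (inner ℝ w v : ℝ)) • (x - w))) := by
    simp only [Jmap_apply, inner_sub_left]
    module
  set X := b ^ (κ-2) * d * ‖v‖ with hX_def
  have hXnn : 0 ≤ X := by positivity
  have hb42 : b ^ (κ-4) * b ^ (2:ℕ) = b ^ (κ-2) := by
    rw [← Real.rpow_natCast b 2, ← Real.rpow_add hb]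
    congr 1; ring
  have hb32 : b ^ (κ-3) * b = b ^ (κ-2) := by
    nth_rewrite 2 [← Real.rpow_one b]
    rw [← Real.rpow_add hb]
    congr 1; ring
  have hκ1 : (0:ℝ) < κ - 1 := by linarith
  have hT0 : ‖(a ^ (κ-1) - b ^ (κ-1)) • v‖ ≤ ((κ-1) * 2 ^ |κ-2|) * X := by
    rw [norm_smul, Real.norm_eq_abs]
    calc |a ^ (κ-1) - b ^ (κ-1)| * ‖v‖
        ≤ ((κ-1) * (2 ^ |κ-2| * b ^ (κ-2)) * d) * ‖v‖ :=
          mul_le_mul_of_nonneg_right h1 (norm_nonneg v)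
      _ = ((κ-1) * 2 ^ |κ-2|) * X := by rw [hX_def]; ring
  have hT1 : ‖((κ-1) * (a ^ (κ-3) - b ^ (κ-3)) * (inner ℝ x v : ℝ)) • x‖ ≤
      ((κ-1) * (4 * |κ-3| * 2 ^ |κ-4|)) * X := by
    rw [norm_smul, Real.norm_eq_abs, abs_mul, abs_mul, abs_of_pos hκ1]
    have hinner : |(inner ℝ x v : ℝ)| ≤ (2*b) * ‖v‖ := by
      calc |(inner ℝ x v : ℝ)| ≤ ‖x‖ * ‖v‖ := abs_real_inner_le_norm x v
        _ ≤ (2*b) * ‖v‖ := mul_le_mul_of_nonneg_right ha2 (norm_nonneg v)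
    calc (κ-1) * |a ^ (κ-3) - b ^ (κ-3)| * |(inner ℝ x v : ℝ)| * ‖x‖
        ≤ (κ-1) * (|κ-3| * (2 ^ |κ-4| * b ^ (κ-4)) * d) * ((2*b) * ‖v‖) * (2*b) := by
          gcongr
      _ = ((κ-1) * (4 * |κ-3| * 2 ^ |κ-4|)) * ((b ^ (κ-4) * b ^ (2:ℕ)) * d * ‖v‖) := by
          ring
      _ = ((κ-1) * (4 * |κ-3| * 2 ^ |κ-4|)) * X := by rw [hb42, hX_def]
  have hT2 : ‖((κ-1) * b ^ (κ-3) * (inner ℝ (x - w) v : ℝ)) • x‖ ≤ ((κ-1) * 2) * X := by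
    rw [norm_smul, Real.norm_eq_abs, abs_mul, abs_mul, abs_of_pos hκ1,
      abs_of_nonneg (Real.rpow_nonneg hb.le _)]
    calc (κ-1) * b ^ (κ-3) * |(inner ℝ (x - w) v : ℝ)| * ‖x‖
        ≤ (κ-1) * b ^ (κ-3) * (d * ‖v‖) * (2*b) := by
          gcongr
          exact abs_real_inner_le_norm (x - w) v
      _ = ((κ-1) * 2) * ((b ^ (κ-3) * b) * d * ‖v‖) := by ring
      _ = ((κ-1) * 2) * X := by rw [hb32, hX_def]
  have hT3 : ‖((κ-1) * b ^ (κ-3) * (inner ℝ w v : ℝ)) • (x - w)‖ ≤ (κ-1) * X := by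
    rw [norm_smul, Real.norm_eq_abs, abs_mul, abs_mul, abs_of_pos hκ1,
      abs_of_nonneg (Real.rpow_nonneg hb.le _)]
    calc (κ-1) * b ^ (κ-3) * |(inner ℝ w v : ℝ)| * ‖x - w‖
        ≤ (κ-1) * b ^ (κ-3) * (b * ‖v‖) * d := by
          gcongr
          exact abs_real_inner_le_norm w v
      _ = (κ-1) * ((b ^ (κ-3) * b) * d * ‖v‖) := by ring
      _ = (κ-1) * X := by rw [hb32, hX_def]
  calc ‖Jmap n κ x v - Jmap n κ w v‖
      ≤ ‖(a ^ (κ-1) - b ^ (κ-1)) • v‖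
        + (‖((κ-1) * (a ^ (κ-3) - b ^ (κ-3)) * (inner ℝ x v : ℝ)) • x‖
        + (‖((κ-1) * b ^ (κ-3) * (inner ℝ (x - w) v : ℝ)) • x‖
        + ‖((κ-1) * b ^ (κ-3) * (inner ℝ w v : ℝ)) • (x - w)‖)) := by
        rw [hdecomp]
        exact (norm_add_le _ _).trans (add_le_add_right ((norm_add_le _ _).trans
          (add_le_add_right (norm_add_le _ _) _)) _)
    _ ≤ ((κ-1) * 2 ^ |κ-2|) * X + (((κ-1) * (4 * |κ-3| * 2 ^ |κ-4|)) * X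
        + (((κ-1) * 2) * X + (κ-1) * X)) :=
        add_le_add hT0 (add_le_add hT1 (add_le_add hT2 hT3))
    _ = ((κ-1) * (2 ^ |κ-2| + 4 * |κ-3| * 2 ^ |κ-4| + 3)) * X := by ring

lemma norm_Jmap_apply_le {n : ℕ} {κ : ℝ} (hκ : 1 < κ) (x v : EuclideanSpace ℝ (Fin n)) :
    ‖Jmap n κ x v‖ ≤ κ * (‖x‖ ^ (κ-1) * ‖v‖) := by
  have hcol : ‖x‖ ^ (κ-3) * ‖x‖ ^ (2:ℕ) = ‖x‖ ^ (κ-1) := by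
    rcases eq_or_ne x 0 with rfl | hx
    · simp [Real.zero_rpow (ne_of_gt (show (0:ℝ) < κ - 1 by linarith))]
    · have hb : (0:ℝ) < ‖x‖ := norm_pos_iff.2 hx
      rw [← Real.rpow_natCast ‖x‖ 2, ← Real.rpow_add hb]
      congr 1; ring
  have hκ1 : (0:ℝ) < κ - 1 := by linarith
  rw [Jmap_apply]
  calc ‖(‖x‖ ^ (κ-1) : ℝ) • v + ((κ - 1) * ‖x‖ ^ (κ - 3) * (inner ℝ x v : ℝ)) • x‖
      ≤ ‖(‖x‖ ^ (κ-1) : ℝ) • v‖ + ‖((κ - 1) * ‖x‖ ^ (κ - 3) * (inner ℝ x v : ℝ)) • x‖ :=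
        norm_add_le _ _
    _ ≤ ‖x‖ ^ (κ-1) * ‖v‖ + (κ-1) * ‖x‖ ^ (κ-3) * (‖x‖ * ‖v‖) * ‖x‖ := by
        rw [norm_smul, norm_smul, Real.norm_eq_abs, Real.norm_eq_abs, abs_mul, abs_mul,
          abs_of_pos hκ1, abs_of_nonneg (Real.rpow_nonneg (norm_nonneg x) _),
          abs_of_nonneg (Real.rpow_nonneg (norm_nonneg x) _)]
        gcongr
        exact abs_real_inner_le_norm x v
    _ = ‖x‖ ^ (κ-1) * ‖v‖ + (κ-1) * ((‖x‖ ^ (κ-3) * ‖x‖ ^ (2:ℕ)) * ‖v‖) := by ring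
    _ = κ * (‖x‖ ^ (κ-1) * ‖v‖) := by rw [hcol]; ring

lemma remainder_le_E0 {n : ℕ} {κ : ℝ} (hκ : 1 < κ) (w z : EuclideanSpace ℝ (Fin n)) :
    ‖sgnPowRemainder n κ w z‖ ≤ (2 + 2*κ) * (max ‖w‖ ‖z‖) ^ κ := by
  set M := max ‖w‖ ‖z‖ with hM_def
  have hM0 : 0 ≤ M := le_trans (norm_nonneg w) (le_max_left _ _)
  have hκ0 : (0:ℝ) ≤ κ - 1 := by linarith
  have hκne : κ - 1 + 1 ≠ 0 := by intro h; linarith [h]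
  have hpow : ∀ y : EuclideanSpace ℝ (Fin n), ‖y‖ ≤ M → ‖sgnPowVec n κ y‖ ≤ M ^ κ := by
    intro y hy
    rw [sgnPowVec, norm_smul, Real.norm_eq_abs,
      abs_of_nonneg (Real.rpow_nonneg (norm_nonneg y) _)]
    calc ‖y‖ ^ (κ-1) * ‖y‖ ≤ M ^ (κ-1) * M :=
          mul_le_mul (Real.rpow_le_rpow (norm_nonneg y) hy hκ0) hy (norm_nonneg y)
            (Real.rpow_nonneg hM0 _)
      _ = M ^ (κ-1+1) := rpow_mul_self_eq _ hM0 hκne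
      _ = M ^ κ := by congr 1; ring
  have hjac : ‖sgnPowJacobi n κ w (z - w)‖ ≤ 2*κ * M ^ κ := by
    rcases eq_or_ne w 0 with rfl | hw
    · rw [sgnPowJacobi, if_pos rfl, norm_zero]
      positivity
    · rw [Jmap_eq_sgnPowJacobi hw]
      calc ‖Jmap n κ w (z - w)‖ ≤ κ * (‖w‖ ^ (κ-1) * ‖z - w‖) := norm_Jmap_apply_le hκ w _
        _ ≤ κ * (M ^ (κ-1) * (2*M)) := by
            have hzw2 : ‖z - w‖ ≤ 2*M := by
              have h1 : ‖z‖ ≤ M := le_max_right _ _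
              have h2 : ‖w‖ ≤ M := le_max_left _ _
              have := norm_sub_le z w
              linarith
            have hr : ‖w‖ ^ (κ-1) ≤ M ^ (κ-1) :=
              Real.rpow_le_rpow (norm_nonneg w) (le_max_left _ _) hκ0
            apply mul_le_mul_of_nonneg_left _ (by linarith : (0:ℝ) ≤ κ)
            exact mul_le_mul hr hzw2 (norm_nonneg _) (Real.rpow_nonneg hM0 _)
        _ = 2*κ * (M ^ (κ-1) * M) := by ring
        _ = 2*κ * M ^ κ := by rw [rpow_mul_self_eq _ hM0 hκne, show κ - 1 + 1 = κ by ring]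
  calc ‖sgnPowRemainder n κ w z‖
      ≤ ‖sgnPowVec n κ z - sgnPowVec n κ w‖ + ‖sgnPowJacobi n κ w (z - w)‖ :=
        norm_sub_le _ _
    _ ≤ (‖sgnPowVec n κ z‖ + ‖sgnPowVec n κ w‖) + ‖sgnPowJacobi n κ w (z - w)‖ := by
        gcongr
        exact norm_sub_le _ _
    _ ≤ (M ^ κ + M ^ κ) + 2*κ * M ^ κ :=
        add_le_add (add_le_add (hpow z (le_max_right _ _)) (hpow w (le_max_left _ _))) hjac
    _ = (2 + 2*κ) * M ^ κ := by ring

lemma remainder_le_E2 {n : ℕ} {κ : ℝ} (hκ : 1 < κ) :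
    ∃ C : ℝ, 0 < C ∧ ∀ w z : EuclideanSpace ℝ (Fin n),
      ‖sgnPowRemainder n κ w z‖ ≤ C * ‖z - w‖ ^ (2:ℝ) * (max ‖w‖ ‖z‖) ^ (κ-2) := by
  set CL := (κ-1) * (2 ^ |κ-2| + 4 * |κ-3| * 2 ^ |κ-4| + 3) with hCL_def
  have hCL : 0 < CL := by
    apply mul_pos (by linarith)
    have h1 : (0:ℝ) < 2 ^ |κ-2| := Real.rpow_pos_of_pos (by norm_num) _
    have h2 : (0:ℝ) ≤ 4 * |κ-3| * 2 ^ |κ-4| := by positivity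
    linarith
  set C := CL * 2 ^ |κ-2| + 9*(2 + 2*κ) + 1 with hC_def
  have h2p : (0:ℝ) < 2 ^ |κ-2| := Real.rpow_pos_of_pos (by norm_num) _
  have hC : 0 < C := by
    have := mul_pos hCL h2p
    nlinarith
  refine ⟨C, hC, fun w z => ?_⟩
  have hdd : ∀ d : ℝ, 0 ≤ d → d ^ (2:ℝ) = d * d := by
    intro d hd
    rw [show (2:ℝ) = ((2:ℕ):ℝ) by norm_num, Real.rpow_natCast]
    ring
  rcases eq_or_ne w 0 with rfl | hw
  · -- w = 0 case
    have hg0 : sgnPowVec n κ (0 : EuclideanSpace ℝ (Fin n)) = 0 := by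
      rw [sgnPowVec]; exact smul_zero _
    have hrem : sgnPowRemainder n κ 0 z = sgnPowVec n κ z := by
      simp [sgnPowRemainder, sgnPowJacobi, hg0]
    rw [hrem, sub_zero, norm_zero, max_eq_right (norm_nonneg z)]
    rcases eq_or_ne z 0 with rfl | hz
    · simp [sgnPowVec, Real.zero_rpow (show (2:ℝ) ≠ 0 by norm_num)]
    · have hz0 : (0:ℝ) < ‖z‖ := norm_pos_iff.2 hz
      rw [sgnPowVec, norm_smul, Real.norm_eq_abs,
        abs_of_nonneg (Real.rpow_nonneg (norm_nonneg z) _)]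
      have he : ‖z‖ ^ (κ-1) * ‖z‖ = ‖z‖ ^ (2:ℝ) * ‖z‖ ^ (κ-2) := by
        rw [rpow_mul_self_eq _ (norm_nonneg z) (by intro h; linarith [h] : κ - 1 + 1 ≠ 0),
          ← Real.rpow_add hz0]
        congr 1; ring
      rw [he]
      have h1C : 1 ≤ C := by nlinarith [mul_pos hCL h2p]
      calc ‖z‖ ^ (2:ℝ) * ‖z‖ ^ (κ-2) = 1 * (‖z‖ ^ (2:ℝ) * ‖z‖ ^ (κ-2)) := by ring
        _ ≤ C * (‖z‖ ^ (2:ℝ) * ‖z‖ ^ (κ-2)) := by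
            apply mul_le_mul_of_nonneg_right h1C
            positivity
        _ = C * ‖z‖ ^ (2:ℝ) * ‖z‖ ^ (κ-2) := by ring
  · -- w ≠ 0
    set M := max ‖w‖ ‖z‖ with hM_def
    have hwM : ‖w‖ ≤ M := le_max_left _ _
    have hzM : ‖z‖ ≤ M := le_max_right _ _
    have hw0 : (0:ℝ) < ‖w‖ := norm_pos_iff.2 hw
    have hM : (0:ℝ) < M := lt_of_lt_of_le hw0 hwM
    have hzw : ‖z‖ - ‖w‖ ≤ ‖z - w‖ := norm_sub_norm_le z w
    rcases le_or_gt (‖w‖/2) (‖z - w‖) with hB | hCc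
    · -- far case
      have hM3 : M ≤ 3 * ‖z - w‖ := by
        apply max_le <;> linarith
      have hMsplit : M ^ κ = M ^ (2:ℝ) * M ^ (κ-2) := by
        rw [← Real.rpow_add hM]; congr 1; ring
      have hM2 : M ^ (2:ℝ) ≤ 9 * ‖z - w‖ ^ (2:ℝ) := by
        rw [hdd M hM.le, hdd _ (norm_nonneg _)]
        nlinarith [norm_nonneg (z - w)]
      calc ‖sgnPowRemainder n κ w z‖ ≤ (2 + 2*κ) * M ^ κ := remainder_le_E0 hκ w z
        _ = (2 + 2*κ) * (M ^ (2:ℝ) * M ^ (κ-2)) := by rw [hMsplit]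
        _ ≤ (2 + 2*κ) * ((9 * ‖z - w‖ ^ (2:ℝ)) * M ^ (κ-2)) := by
            have hM20 : (0:ℝ) ≤ M ^ (κ-2) := Real.rpow_nonneg hM.le _
            have h22 : (0:ℝ) ≤ 2 + 2*κ := by linarith
            apply mul_le_mul_of_nonneg_left _ h22
            exact mul_le_mul_of_nonneg_right hM2 hM20
        _ = (9*(2 + 2*κ)) * ‖z - w‖ ^ (2:ℝ) * M ^ (κ-2) := by ring
        _ ≤ C * ‖z - w‖ ^ (2:ℝ) * M ^ (κ-2) := by
            have h1 : (0:ℝ) ≤ ‖z - w‖ ^ (2:ℝ) := Real.rpow_nonneg (norm_nonneg _) _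
            have h2 : (0:ℝ) ≤ M ^ (κ-2) := Real.rpow_nonneg hM.le _
            have h3 : 9*(2 + 2*κ) ≤ C := by nlinarith [mul_pos hCL h2p]
            apply mul_le_mul_of_nonneg_right _ h2
            exact mul_le_mul_of_nonneg_right h3 h1
    · -- near case: mean value inequality on the segment
      have hdC : ‖z - w‖ ≤ ‖w‖/2 := hCc.le
      have hmem : ∀ x ∈ segment ℝ w z, ‖x - w‖ ≤ ‖z - w‖ := by
        intro x hx
        rw [segment_eq_image'] at hx
        obtain ⟨t, ht, rfl⟩ := hx
        rw [add_sub_cancel_left, norm_smul, Real.norm_eq_abs, abs_of_nonneg ht.1]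
        exact mul_le_of_le_one_left (norm_nonneg _) ht.2
      have hx0 : ∀ x ∈ segment ℝ w z, x ≠ 0 := by
        intro x hx h0
        have h1 := hmem x hx
        have h2 : ‖w‖ - ‖x‖ ≤ ‖x - w‖ := by
          rw [norm_sub_rev]
          exact norm_sub_norm_le w x
        rw [h0, norm_zero] at h2
        have : ‖x - w‖ ≤ ‖w‖/2 := le_trans h1 hdC
        rw [h0] at this
        rw [zero_sub, norm_neg] at this
        linarith
      have hder : ∀ x ∈ segment ℝ w z, HasFDerivWithinAt
          (fun x => sgnPowVec n κ x - Jmap n κ w x) (Jmap n κ x - Jmap n κ w) (segment ℝ w z) x := by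
        intro x hx
        exact ((hasFDerivAt_sgnPowVec (hx0 x hx)).sub
          ((Jmap n κ w).hasFDerivAt)).hasFDerivWithinAt
      have hbound : ∀ x ∈ segment ℝ w z, ‖Jmap n κ x - Jmap n κ w‖ ≤ CL * ‖w‖ ^ (κ-2) * ‖z - w‖ := by
        intro x hx
        apply ContinuousLinearMap.opNorm_le_bound
        · have : (0:ℝ) ≤ ‖w‖ ^ (κ-2) := Real.rpow_nonneg (norm_nonneg w) _
          positivity
        · intro v
          rw [ContinuousLinearMap.sub_apply]
          calc ‖Jmap n κ x v - Jmap n κ w v‖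
              ≤ CL * (‖w‖ ^ (κ-2) * ‖x - w‖ * ‖v‖) :=
                Jmap_lip hκ v hw (le_trans (hmem x hx) hdC)
            _ ≤ CL * (‖w‖ ^ (κ-2) * ‖z - w‖ * ‖v‖) := by
                apply mul_le_mul_of_nonneg_left _ hCL.le
                have h1 : (0:ℝ) ≤ ‖w‖ ^ (κ-2) := Real.rpow_nonneg (norm_nonneg w) _
                apply mul_le_mul_of_nonneg_right _ (norm_nonneg v)
                exact mul_le_mul_of_nonneg_left (hmem x hx) h1
            _ = CL * ‖w‖ ^ (κ-2) * ‖z - w‖ * ‖v‖ := by ring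
      have hkey := Convex.norm_image_sub_le_of_norm_hasFDerivWithin_le hder hbound
        (convex_segment w z) (left_mem_segment ℝ w z) (right_mem_segment ℝ w z)
      have hfz : (sgnPowVec n κ z - Jmap n κ w z) - (sgnPowVec n κ w - Jmap n κ w w) =
          sgnPowRemainder n κ w z := by
        rw [sgnPowRemainder, Jmap_eq_sgnPowJacobi hw, map_sub]
        abel
      rw [hfz] at hkey
      have hwMle : ‖w‖ ^ (κ-2) ≤ 2 ^ |κ-2| * M ^ (κ-2) := by
        have hM32 : M ≤ (3/2) * ‖w‖ := max_le (by linarith) (by linarith)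
        exact annulus_rpow_le (κ-2) hM (by linarith) (by linarith)
      calc ‖sgnPowRemainder n κ w z‖
          ≤ CL * ‖w‖ ^ (κ-2) * ‖z - w‖ * ‖z - w‖ := hkey
        _ ≤ CL * (2 ^ |κ-2| * M ^ (κ-2)) * ‖z - w‖ * ‖z - w‖ := by
            have := norm_nonneg (z - w)
            apply mul_le_mul_of_nonneg_right _ this
            apply mul_le_mul_of_nonneg_right _ this
            exact mul_le_mul_of_nonneg_left hwMle hCL.le
        _ = (CL * 2 ^ |κ-2|) * (‖z - w‖ * ‖z - w‖) * M ^ (κ-2) := by ring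
        _ = (CL * 2 ^ |κ-2|) * ‖z - w‖ ^ (2:ℝ) * M ^ (κ-2) := by
            rw [hdd _ (norm_nonneg (z - w))]
        _ ≤ C * ‖z - w‖ ^ (2:ℝ) * M ^ (κ-2) := by
            have h1 : (0:ℝ) ≤ ‖z - w‖ ^ (2:ℝ) := Real.rpow_nonneg (norm_nonneg _) _
            have h2 : (0:ℝ) ≤ M ^ (κ-2) := Real.rpow_nonneg hM.le _
            have h3 : CL * 2 ^ |κ-2| ≤ C := by nlinarith
            apply mul_le_mul_of_nonneg_right _ h2
            exact mul_le_mul_of_nonneg_right h3 h1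

lemma sgnPowRemainder_self (n : ℕ) (κ : ℝ) (w : EuclideanSpace ℝ (Fin n)) :
    sgnPowRemainder n κ w w = 0 := by
  rw [sgnPowRemainder, sub_self, sub_self, zero_sub, neg_eq_zero, sgnPowJacobi]
  split
  · rfl
  · rw [inner_zero_right]
    simp

end Aux

theorem sgnPowRemainder_bound (n : ℕ) (κ lam : ℝ) (hκ : 1 < κ)
    (hlam : lam ∈ Set.Icc (0 : ℝ) 2) :
    ∃ C : ℝ, 0 < C ∧ ∀ w z : EuclideanSpace ℝ (Fin n),
      ‖sgnPowRemainder n κ w z‖ ≤ C * ‖z - w‖ ^ lam * (max ‖w‖ ‖z‖) ^ (κ - lam) := by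
  obtain ⟨hl0, hl2⟩ := hlam
  obtain ⟨C2, hC2, hE2⟩ := remainder_le_E2 (n := n) hκ
  have hC0 : (0:ℝ) < 2 + 2*κ := by linarith
  refine ⟨(2 + 2*κ) ^ (1 - lam/2) * C2 ^ (lam/2),
    mul_pos (Real.rpow_pos_of_pos hC0 _) (Real.rpow_pos_of_pos hC2 _), fun w z => ?_⟩
  set M := max ‖w‖ ‖z‖ with hM_def
  have hM0 : 0 ≤ M := le_trans (norm_nonneg w) (le_max_left _ _)
  have hRHSnn : 0 ≤ (2 + 2*κ) ^ (1 - lam/2) * C2 ^ (lam/2) * ‖z - w‖ ^ lam * M ^ (κ - lam) := by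
    have h1 : (0:ℝ) ≤ ‖z - w‖ ^ lam := Real.rpow_nonneg (norm_nonneg _) _
    have h2 : (0:ℝ) ≤ M ^ (κ - lam) := Real.rpow_nonneg hM0 _
    have h3 : (0:ℝ) ≤ (2 + 2*κ) ^ (1 - lam/2) := Real.rpow_nonneg hC0.le _
    have h4 : (0:ℝ) ≤ C2 ^ (lam/2) := Real.rpow_nonneg hC2.le _
    positivity
  rcases eq_or_ne (sgnPowRemainder n κ w z) 0 with hrem | hrem
  · rw [hrem, norm_zero]; exact hRHSnn
  -- now the remainder is nonzero, hence z ≠ w and M > 0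
  have ha : (0:ℝ) < ‖sgnPowRemainder n κ w z‖ := norm_pos_iff.2 hrem
  have hzw : z ≠ w := by
    intro h
    rw [h, sgnPowRemainder_self] at hrem
    exact hrem rfl
  have hd : (0:ℝ) < ‖z - w‖ := by
    rw [norm_pos_iff, sub_ne_zero]
    exact hzw
  have hM : (0:ℝ) < M := by
    rcases eq_or_lt_of_le hM0 with h | h
    · exfalso
      have hw0 : w = 0 := by
        have : ‖w‖ ≤ M := le_max_left _ _
        rw [← h] at this
        exact norm_le_zero_iff.1 this
      have hz0 : z = 0 := by
        have : ‖z‖ ≤ M := le_max_right _ _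
        rw [← h] at this
        exact norm_le_zero_iff.1 this
      rw [hw0, hz0, sgnPowRemainder_self] at hrem
      exact hrem rfl
    · exact h
  set a := ‖sgnPowRemainder n κ w z‖ with ha_def
  set d := ‖z - w‖ with hd_def
  have h0 : a ≤ (2 + 2*κ) * M ^ κ := remainder_le_E0 hκ w z
  have h2 : a ≤ C2 * d ^ (2:ℝ) * M ^ (κ-2) := hE2 w z
  have hθ0 : (0:ℝ) ≤ lam/2 := by linarith
  have hθ1 : (0:ℝ) ≤ 1 - lam/2 := by linarith
  have key : a = a ^ (1 - lam/2) * a ^ (lam/2) := by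
    rw [← Real.rpow_add ha]
    norm_num
  have hMsplit : M ^ (κ*(1-lam/2)) * M ^ ((κ-2)*(lam/2)) = M ^ (κ - lam) := by
    rw [← Real.rpow_add hM]; congr 1; ring
  have hdsplit : d ^ ((2:ℝ)*(lam/2)) = d ^ lam := by congr 1; ring
  calc a = a ^ (1 - lam/2) * a ^ (lam/2) := key
    _ ≤ ((2 + 2*κ) * M ^ κ) ^ (1 - lam/2) * (C2 * d ^ (2:ℝ) * M ^ (κ-2)) ^ (lam/2) := by
        apply mul_le_mul (Real.rpow_le_rpow ha.le h0 hθ1) (Real.rpow_le_rpow ha.le h2 hθ0)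
          (Real.rpow_nonneg ha.le _)
        exact Real.rpow_nonneg (by positivity) _
    _ = (2 + 2*κ) ^ (1 - lam/2) * C2 ^ (lam/2) * d ^ lam * M ^ (κ - lam) := by
        rw [Real.mul_rpow hC0.le (Real.rpow_nonneg hM0 _),
          Real.mul_rpow (mul_nonneg hC2.le (Real.rpow_nonneg hd.le _))
            (Real.rpow_nonneg hM0 _),
          Real.mul_rpow hC2.le (Real.rpow_nonneg hd.le _),
          ← Real.rpow_mul hM0, ← Real.rpow_mul hM0, ← Real.rpow_mul hd.le,
          ← hMsplit, ← hdsplit]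
        ring
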